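/- arXiv:2507.13532 — 4 statements merged into one kernel-verified Lean document; each statement's English description precedes it below -/
import Mathlib

section
/- Let 1/2 ≤ p ≤ 1, let d ≥ 2 be an integer, and set a = (d^(2p−1) − 1)/(d − 1). Then for every integer k with 1 ≤ k ≤ d, one has k + k(k−1)·a ≤ k^(2p). -/
/-!
Write `k ^ (2p) = k * k ^ (2p - 1)`. Since `0 ≤ 2p - 1 ≤ 1`, the map `t ↦ t ^ (2p - 1)` is concave,
so at `t = k ∈ [1, d]` it lies above its chord through `(1, 1)` and `(d, d ^ (2p - 1))`, i.e.
`k ^ (2p - 1) ≥ 1 + (k - 1) a`; multiplying by `k` gives the claim.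
-/

theorem ConcaveOn.sub_mul_secant_le {𝕜 : Type*} [Field 𝕜] [LinearOrder 𝕜] [IsStrictOrderedRing 𝕜]
    {s : Set 𝕜} {f : 𝕜 → 𝕜} (hf : ConcaveOn 𝕜 s f) {a x y : 𝕜} (ha : a ∈ s) (hx : x ∈ s)
    (hy : y ∈ s) (hax : a ≤ x) (hxy : x ≤ y) (hay : a < y) :
    (x - a) * ((f y - f a) / (y - a)) ≤ f x - f a := by
  rcases hax.eq_or_lt with rfl | hax
  · simp
  have hslope := hf.neg.secant_mono ha hx hy hax.ne' hay.ne' hxy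
  simp only [Pi.neg_apply] at hslope
  rw [← le_div_iff₀' (sub_pos.2 hax)]
  linear_combination hslope

theorem stmt_4 (p : ℝ) (hp1 : 1/2 ≤ p) (hp2 : p ≤ 1) (d k : ℕ)
    (hd : 2 ≤ d) (hk1 : 1 ≤ k) (hkd : k ≤ d) :
    (k : ℝ) + (k : ℝ) * ((k : ℝ) - 1) * (((d : ℝ) ^ (2*p - 1) - 1) / ((d : ℝ) - 1))
      ≤ (k : ℝ) ^ (2*p) := by
  have hk : (1 : ℝ) ≤ k := by exact_mod_cast hk1
  have hkd' : (k : ℝ) ≤ d := by exact_mod_cast hkd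
  have hd' : (1 : ℝ) < d := by exact_mod_cast hd
  have hchord := (Real.concaveOn_rpow (p := 2*p - 1) (by linarith) (by linarith)).sub_mul_secant_le
    (Set.mem_Ici.2 zero_le_one) (Set.mem_Ici.2 (by linarith)) (Set.mem_Ici.2 (by linarith))
    hk hkd' hd'
  rw [Real.one_rpow] at hchord
  calc (k : ℝ) + k * (k - 1) * ((d ^ (2*p - 1) - 1) / (d - 1))
      = k * (1 + (k - 1) * ((d ^ (2*p - 1) - 1) / (d - 1))) := by ring
    _ ≤ k * k ^ (2*p - 1) := by gcongr; linarith
    _ = k ^ (2*p) := by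
      rw [← Real.rpow_one_add' (by positivity) (by linarith)]
      ring_nf
end

section
/- Let d ≥ 2 and 1/2 ≤ p < 1, and set a = (d^(2p−1) − 1)/(d − 1). Then 0 ≤ a < 1, and hence there exist d unit vectors e_1, …, e_d in ℝ^d with ⟨e_i, e_j⟩ = a for all i ≠ j; moreover for such vectors ‖e_1 + ⋯ + e_d‖ = d^p. -/
open scoped RealInnerProductSpace
open Finset

/-! The Gram matrix of `e₁, …, e_d` is `(1 - a) I + a J`, so `‖∑ eᵢ‖²`, the sum of its entries, is
`d (1 + (d - 1) a) = d · d^(2p-1) = d^(2p)`. Such vectors exist as soon as `a ≤ 1` and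
`1 + (d - 1) a ≥ 0`: take `eᵢ = b εᵢ + c (ε₁ + ⋯ + ε_d)` in an orthonormal basis `ε`, with
`b = √(1 - a)` and `c = (√(1 + (d - 1) a) - b) / d`. -/

section Equiangular

variable {ι E : Type*} [Fintype ι] [NormedAddCommGroup E] [InnerProductSpace ℝ E]

theorem norm_sum_sq_of_inner_eq {e : ι → E} {a : ℝ} (hnorm : ∀ i, ‖e i‖ = 1)
    (hinner : ∀ i j, i ≠ j → ⟪e i, e j⟫ = a) :
    ‖∑ i, e i‖ ^ 2 = Fintype.card ι * (1 + (Fintype.card ι - 1) * a) := by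
  classical
  have hgram : ∀ i j, ⟪e i, e j⟫ = a + (1 - a) * if i = j then 1 else 0 := by
    intro i j
    by_cases hij : i = j
    · subst hij
      simp [hnorm]
    · simp [hinner i j hij, hij]
  rw [← real_inner_self_eq_norm_sq, sum_inner]
  simp only [inner_sum, hgram, sum_add_distrib, ← mul_sum, sum_ite_eq, mem_univ, if_true,
    sum_const, card_univ, nsmul_eq_mul]
  ring

theorem inner_smul_add_smul_sum [DecidableEq ι] {v : ι → E} (hv : Orthonormal ℝ v) (b c : ℝ)
    (i j : ι) :
    ⟪b • v i + c • ∑ k, v k, b • v j + c • ∑ k, v k⟫ =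
      b ^ 2 * (if i = j then 1 else 0) + 2 * b * c + Fintype.card ι * c ^ 2 := by
  have hvv := orthonormal_iff_ite.mp hv
  have hvu : ∀ i, ⟪v i, ∑ k, v k⟫ = 1 := fun i => by simp [inner_sum, hvv]
  have huv : ∀ j, ⟪∑ k, v k, v j⟫ = 1 := fun j => by rw [real_inner_comm, hvu]
  have huu : ⟪∑ k, v k, ∑ k, v k⟫ = Fintype.card ι := by simp only [sum_inner, hvu]; simp
  simp only [inner_add_left, inner_add_right, real_inner_smul_left, real_inner_smul_right,
    hvv, hvu, huv, huu]
  split_ifs <;> ring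

theorem exists_unit_vectors_inner_eq {a : ℝ} (ha : a ≤ 1)
    (ha' : 0 ≤ 1 + (Fintype.card ι - 1) * a) :
    ∃ e : ι → EuclideanSpace ℝ ι, (∀ i, ‖e i‖ = 1) ∧ ∀ i j, i ≠ j → ⟪e i, e j⟫ = a := by
  classical
  cases isEmpty_or_nonempty ι
  · exact ⟨isEmptyElim, isEmptyElim, isEmptyElim⟩
  set n : ℝ := (Fintype.card ι : ℝ)
  have hn : n ≠ 0 := by positivity
  set b := √(1 - a)
  set s := √(1 + (n - 1) * a)
  set c := (s - b) / n
  have hb : b ^ 2 = 1 - a := Real.sq_sqrt (by linarith)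
  have hs : s ^ 2 = 1 + (n - 1) * a := Real.sq_sqrt ha'
  -- `2bc + nc² = (s² - b²) / n`
  have hoff : 2 * b * c + n * c ^ 2 = a := by
    simp only [c]
    field_simp
    linear_combination hs - hb
  have hv := (EuclideanSpace.basisFun ι ℝ).orthonormal
  refine ⟨fun i => b • EuclideanSpace.basisFun ι ℝ i + c • ∑ k, EuclideanSpace.basisFun ι ℝ k,
    fun i => ?_, fun i j hij => ?_⟩
  · rw [norm_eq_sqrt_real_inner, inner_smul_add_smul_sum hv, if_pos rfl, Real.sqrt_eq_one]
    linear_combination hb + hoff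
  · rw [inner_smul_add_smul_sum hv, if_neg hij]
    linear_combination hoff

end Equiangular

theorem rpow_two_mul_sub_one_sub_one_div_mem_Ico {x p : ℝ} (hx : 1 < x) (hp1 : 1 / 2 ≤ p)
    (hp2 : p < 1) : (x ^ (2 * p - 1) - 1) / (x - 1) ∈ Set.Ico 0 1 := by
  have hx1 : 0 < x - 1 := sub_pos.2 hx
  have hlo : 1 ≤ x ^ (2 * p - 1) := Real.one_le_rpow hx.le (by linarith)
  have hhi : x ^ (2 * p - 1) < x := by
    simpa using Real.rpow_lt_rpow_of_exponent_lt hx (show 2 * p - 1 < 1 by linarith)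
  exact ⟨div_nonneg (by linarith) hx1.le, (div_lt_one hx1).2 (by linarith)⟩

theorem stmt_5 (d : ℕ) (hd : 2 ≤ d) (p : ℝ) (hp1 : 1/2 ≤ p) (hp2 : p < 1) :
    let a : ℝ := ((d : ℝ) ^ (2*p - 1) - 1) / ((d : ℝ) - 1)
    (0 ≤ a ∧ a < 1) ∧
    (∃ e : Fin d → EuclideanSpace ℝ (Fin d),
      (∀ i, ‖e i‖ = 1) ∧ (∀ i j, i ≠ j → ⟪e i, e j⟫ = a)) ∧
    (∀ e : Fin d → EuclideanSpace ℝ (Fin d),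
      (∀ i, ‖e i‖ = 1) → (∀ i j, i ≠ j → ⟪e i, e j⟫ = a) →
      ‖∑ i, e i‖ = (d : ℝ) ^ p) := by
  intro a
  have hd1 : (1 : ℝ) < d := by exact_mod_cast hd
  have ha := rpow_two_mul_sub_one_sub_one_div_mem_Ico hd1 hp1 hp2
  have hsum : 1 + ((d : ℝ) - 1) * a = (d : ℝ) ^ (2 * p - 1) := by
    simp only [a]
    field_simp [(sub_pos.2 hd1).ne']
    ring
  refine ⟨ha, exists_unit_vectors_inner_eq ha.2.le ?_, fun e hnorm hinner => ?_⟩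
  · rw [Fintype.card_fin, hsum]
    positivity
  · rw [← sq_eq_sq₀ (norm_nonneg _) (by positivity), norm_sum_sq_of_inner_eq hnorm hinner,
      Fintype.card_fin, hsum, ← Real.rpow_natCast, ← Real.rpow_mul (by positivity),
      ← Real.rpow_one_add' (by positivity) (by linarith)]
    ring_nf
end

section
/- (Karamata's inequality) Let f : I → ℝ be convex on an interval I, and let x_1 ≥ ⋯ ≥ x_n and y_1 ≥ ⋯ ≥ y_n be points of I such that x_1 + ⋯ + x_i ≥ y_1 + ⋯ + y_i for all i < n and x_1 + ⋯ + x_n = y_1 + ⋯ + y_n. Then f(x_1) + ⋯ + f(x_n) ≥ f(y_1) + ⋯ + f(y_n). Moreover, if f is strictly convex, equality holds if and only if x_i = y_i for all i. -/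
/-!
Write `f (x i) - f (y i) = c i * (x i - y i)` with the secant slope `c i = slope f (y i) (x i)`.
Abel summation turns `∑ f x - ∑ f y` into a sum of products of the partial sums of `x - y`,
nonnegative by majorization, with differences of consecutive slopes, nonnegative because the
secant slopes of a convex function increase in both endpoints. Indices with `x i = y i`
contribute nothing, so the slopes only have to decrease along the remaining indices.

For the equality case, the midpoint sequence `(x + y) / 2` still majorizes `y`, while strict
convexity puts `∑ f ((x + y) / 2)` strictly below `(∑ f x + ∑ f y) / 2` as soon as `x ≠ y`;
hence `∑ f y < ∑ f x`.
-/

open Finset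

theorem ConvexOn.slope_le_slope {𝕜 : Type*} [Field 𝕜] [LinearOrder 𝕜] [IsStrictOrderedRing 𝕜]
    {s : Set 𝕜} {f : 𝕜 → 𝕜} (hf : ConvexOn 𝕜 s f) {a b a' b' : 𝕜}
    (ha : a ∈ s) (hb : b ∈ s) (ha' : a' ∈ s) (hb' : b' ∈ s)
    (hab : a ≠ b) (hab' : a' ≠ b') (haa' : a ≤ a') (hbb' : b ≤ b') :
    slope f a b ≤ slope f a' b' := by
  by_cases hb'a : b' = a
  · -- then `b < a = b' < a'`, so we may pass through the pair `(a', b)` instead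
    have hba' : b ≠ a' := fun h => hab (le_antisymm (hb'a ▸ hbb' : b ≤ a) (h ▸ haa')).symm
    calc slope f a b = slope f b a := slope_comm f a b
      _ ≤ slope f b a' := hf.slope_mono hb ⟨ha, hab⟩ ⟨ha', hba'.symm⟩ haa'
      _ = slope f a' b := slope_comm f b a'
      _ ≤ slope f a' b' := hf.slope_mono ha' ⟨hb, hba'⟩ ⟨hb', hab'.symm⟩ hbb'
  · calc slope f a b ≤ slope f a b' := hf.slope_mono ha ⟨hb, hab.symm⟩ ⟨hb', hb'a⟩ hbb'
      _ = slope f b' a := slope_comm f a b'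
      _ ≤ slope f b' a' := hf.slope_mono hb' ⟨ha, Ne.symm hb'a⟩ ⟨ha', hab'⟩ haa'
      _ = slope f a' b' := slope_comm f b' a'

theorem mul_sum_range_le_sum_range_mul {R : Type*} [Ring R] [PartialOrder R] [IsOrderedRing R]
    {c d : ℕ → R} {n : ℕ} (m : R)
    (hd : ∀ k ≤ n, 0 ≤ ∑ i ∈ range k, d i)
    (hc : ∀ i j, i ≤ j → j < n → d i ≠ 0 → d j ≠ 0 → c j ≤ c i)
    (hm : ∀ i < n, d i ≠ 0 → m ≤ c i) :
    m * ∑ i ∈ range n, d i ≤ ∑ i ∈ range n, c i * d i := by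
  induction n generalizing m with
  | zero => simp
  | succ n ih =>
    have hd' : ∀ k ≤ n, 0 ≤ ∑ i ∈ range k, d i := fun k hk => hd k (by omega)
    have hc' : ∀ i j, i ≤ j → j < n → d i ≠ 0 → d j ≠ 0 → c j ≤ c i :=
      fun i j hij hj => hc i j hij (by omega)
    rw [sum_range_succ, sum_range_succ]
    by_cases hdn : d n = 0
    · simpa [hdn] using ih m hd' hc' fun i hi => hm i (by omega)
    · calc m * (∑ i ∈ range n, d i + d n)
          ≤ c n * (∑ i ∈ range n, d i + d n) :=
            mul_le_mul_of_nonneg_right (hm n (by omega) hdn)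
              (by simpa [sum_range_succ] using hd (n + 1) le_rfl)
        _ = c n * ∑ i ∈ range n, d i + c n * d n := mul_add _ _ _
        _ ≤ ∑ i ∈ range n, c i * d i + c n * d n := by
            gcongr
            exact ih (c n) hd' hc' fun i hi hdi => hc i n (by omega) (by omega) hdi hdn

section Karamata

variable {𝕜 : Type*} [Field 𝕜] [LinearOrder 𝕜] [IsStrictOrderedRing 𝕜]
  {I : Set 𝕜} {f : 𝕜 → 𝕜} {n : ℕ} {x y : ℕ → 𝕜}

theorem ConvexOn.sum_le_sum_of_majorizes (hf : ConvexOn 𝕜 I f)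
    (hxI : ∀ i < n, x i ∈ I) (hyI : ∀ i < n, y i ∈ I)
    (hxdec : ∀ i j, i ≤ j → j < n → x j ≤ x i)
    (hydec : ∀ i j, i ≤ j → j < n → y j ≤ y i)
    (hmaj : ∀ m < n, ∑ i ∈ range m, y i ≤ ∑ i ∈ range m, x i)
    (hsum : ∑ i ∈ range n, x i = ∑ i ∈ range n, y i) :
    ∑ i ∈ range n, f (y i) ≤ ∑ i ∈ range n, f (x i) := by
  have hsecant : ∑ i ∈ range n, f (x i) - ∑ i ∈ range n, f (y i)
      = ∑ i ∈ range n, slope f (y i) (x i) * (x i - y i) := by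
    rw [← sum_sub_distrib]
    exact sum_congr rfl fun i _ => by rw [mul_comm, ← smul_eq_mul, sub_smul_slope, vsub_eq_sub]
  have hpartial : ∀ k ≤ n, 0 ≤ ∑ i ∈ range k, (x i - y i) := by
    intro k hk
    rw [sum_sub_distrib, sub_nonneg]
    rcases hk.lt_or_eq with hk | rfl
    · exact hmaj k hk
    · exact hsum.ge
  have hslope : ∀ i j, i ≤ j → j < n → x i - y i ≠ 0 → x j - y j ≠ 0 →
      slope f (y j) (x j) ≤ slope f (y i) (x i) := fun i j hij hj hi hj' =>
    hf.slope_le_slope (hyI j hj) (hxI j hj) (hyI i (by omega)) (hxI i (by omega))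
      (sub_ne_zero.1 hj').symm (sub_ne_zero.1 hi).symm (hydec i j hij hj) (hxdec i j hij hj)
  obtain ⟨m, hm⟩ := ((range n).image fun i => slope f (y i) (x i)).bddBelow
  have := mul_sum_range_le_sum_range_mul m hpartial hslope
    fun i hi _ => hm (mem_image_of_mem _ (mem_range.2 hi))
  rw [sum_sub_distrib, hsum, sub_self, mul_zero] at this
  linarith

theorem StrictConvexOn.sum_lt_sum_of_majorizes (hf : StrictConvexOn 𝕜 I f)
    (hxI : ∀ i < n, x i ∈ I) (hyI : ∀ i < n, y i ∈ I)
    (hxdec : ∀ i j, i ≤ j → j < n → x j ≤ x i)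
    (hydec : ∀ i j, i ≤ j → j < n → y j ≤ y i)
    (hmaj : ∀ m < n, ∑ i ∈ range m, y i ≤ ∑ i ∈ range m, x i)
    (hsum : ∑ i ∈ range n, x i = ∑ i ∈ range n, y i)
    (hne : ∃ i < n, x i ≠ y i) :
    ∑ i ∈ range n, f (y i) < ∑ i ∈ range n, f (x i) := by
  set z : ℕ → 𝕜 := fun i => (1 / 2 : 𝕜) • x i + (1 / 2 : 𝕜) • y i with hz
  have hhalf : (1 / 2 : 𝕜) + 1 / 2 = 1 := add_halves 1
  have hsum_z : ∀ m, ∑ i ∈ range m, z i = (∑ i ∈ range m, x i + ∑ i ∈ range m, y i) / 2 := by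
    intro m
    simp only [hz, smul_eq_mul, sum_add_distrib, ← mul_sum]
    ring
  have hzy : ∑ i ∈ range n, f (y i) ≤ ∑ i ∈ range n, f (z i) := by
    refine hf.convexOn.sum_le_sum_of_majorizes
      (fun i hi => hf.1 (hxI i hi) (hyI i hi) (by norm_num) (by norm_num) hhalf) hyI
      (fun i j hij hj => ?_) hydec (fun m hm => ?_) ?_
    · have := hxdec i j hij hj
      have := hydec i j hij hj
      simp only [hz, smul_eq_mul]
      linarith
    · rw [hsum_z]
      linarith [hmaj m hm]
    · rw [hsum_z, hsum, add_self_div_two]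
  have hz_lt : ∑ i ∈ range n, f (z i)
      < ∑ i ∈ range n, ((1 / 2 : 𝕜) • f (x i) + (1 / 2 : 𝕜) • f (y i)) := by
    obtain ⟨i, hi, hxy⟩ := hne
    refine sum_lt_sum (fun j hj => ?_) ⟨i, mem_range.2 hi, ?_⟩
    · have hj := mem_range.1 hj
      exact hf.convexOn.2 (hxI j hj) (hyI j hj) (by norm_num) (by norm_num) hhalf
    · exact hf.2 (hxI i hi) (hyI i hi) hxy (by norm_num) (by norm_num) hhalf
  simp only [smul_eq_mul, sum_add_distrib, ← mul_sum] at hz_lt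
  linarith

end Karamata

theorem stmt_11 (I : Set ℝ) (f : ℝ → ℝ) (n : ℕ)
    (x y : ℕ → ℝ)
    (hxI : ∀ i < n, x i ∈ I) (hyI : ∀ i < n, y i ∈ I)
    (hxdec : ∀ i j, i ≤ j → j < n → x j ≤ x i)
    (hydec : ∀ i j, i ≤ j → j < n → y j ≤ y i)
    (hmaj : ∀ m < n, ∑ i ∈ Finset.range m, y i ≤ ∑ i ∈ Finset.range m, x i)
    (hsum : ∑ i ∈ Finset.range n, x i = ∑ i ∈ Finset.range n, y i)
    (hconv : ConvexOn ℝ I f) :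
    (∑ i ∈ Finset.range n, f (y i) ≤ ∑ i ∈ Finset.range n, f (x i)) ∧
    (StrictConvexOn ℝ I f →
      ((∑ i ∈ Finset.range n, f (x i) = ∑ i ∈ Finset.range n, f (y i)) ↔
        ∀ i < n, x i = y i)) := by
  refine ⟨hconv.sum_le_sum_of_majorizes hxI hyI hxdec hydec hmaj hsum, fun hf => ⟨?_, ?_⟩⟩
  · intro hfeq
    by_contra! hne
    exact (hf.sum_lt_sum_of_majorizes hxI hyI hxdec hydec hmaj hsum hne).ne' hfeq
  · intro hxy
    exact sum_congr rfl fun i hi => by rw [hxy i (mem_range.1 hi)]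
end

section
/- Let c : ℝ → [0,∞) be even, and let e_1, …, e_k be unit vectors in ℝ^d with associated nonzero real masses m_1, …, m_k summing to 0, such that for all i ≠ j: ⟨e_i, e_j⟩ ≤ (c(m_i+m_j)² − c(m_i)² − c(m_j)²)/(2 c(m_i) c(m_j)) (a 'satisfactory configuration'), where c(m_i) > 0 for all i. Then 0 ≤ Σ_i c(m_i)² + Σ_{i<j} (c(m_i+m_j)² − c(m_i)² − c(m_j)²). -/
/-!
The right-hand side dominates `‖∑ i, c (m i) • e i‖ ^ 2 ≥ 0`: expanding the square gives the
diagonal terms `c (m i) ^ 2` (the `e i` are unit vectors), and each cross term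
`2 c (m i) c (m j) ⟪e i, e j⟫` is at most `c (m i + m j) ^ 2 - c (m i) ^ 2 - c (m j) ^ 2`
by the satisfactory inequality multiplied through by `2 c (m i) c (m j) > 0`.
-/

open scoped RealInnerProductSpace

open Finset

lemma Finset.sum_sum_eq_sum_diag_add_sum_lt {ι M : Type*} [Fintype ι] [LinearOrder ι]
    [AddCommMonoid M] (f : ι → ι → M) :
    ∑ i, ∑ j, f i j = ∑ i, f i i + ∑ i, ∑ j ∈ univ.filter (fun j => i < j), (f i j + f j i) := by
  have hrow : ∀ i, ∑ j, f i j = f i i + ∑ j ∈ univ.filter (fun j => j < i), f i j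
      + ∑ j ∈ univ.filter (fun j => i < j), f i j := by
    intro i
    have hsplit : ∀ j, f i j = (if j = i then f i j else 0) + (if j < i then f i j else 0)
        + (if i < j then f i j else 0) := by
      intro j
      rcases lt_trichotomy j i with h | rfl | h
      · simp [h, h.ne, h.not_gt]
      · simp
      · simp [h, h.ne', h.not_gt]
    rw [sum_congr rfl fun j _ => hsplit j, sum_add_distrib, sum_add_distrib, sum_ite_eq',
      if_pos (mem_univ i), sum_ite, sum_ite, sum_const_zero, sum_const_zero, add_zero, add_zero]
  have hswap : ∑ i, ∑ j ∈ univ.filter (fun j => j < i), f i j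
      = ∑ i, ∑ j ∈ univ.filter (fun j => i < j), f j i :=
    sum_comm' (by simp)
  simp only [hrow, sum_add_distrib, hswap]
  abel

lemma norm_sum_sq_eq_sum_add_sum_lt {ι E : Type*} [Fintype ι] [LinearOrder ι]
    [NormedAddCommGroup E] [InnerProductSpace ℝ E] (v : ι → E) :
    ‖∑ i, v i‖ ^ 2 = ∑ i, ‖v i‖ ^ 2 + ∑ i, ∑ j ∈ univ.filter (fun j => i < j), 2 * ⟪v i, v j⟫ := by
  rw [← real_inner_self_eq_norm_sq, sum_inner]
  simp_rw [inner_sum]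
  rw [sum_sum_eq_sum_diag_add_sum_lt]
  congr 1
  · simp only [real_inner_self_eq_norm_sq]
  · refine sum_congr rfl fun i _ => sum_congr rfl fun j _ => ?_
    rw [real_inner_comm (v i) (v j), two_mul]

lemma two_mul_inner_smul_smul_le {E : Type*} [NormedAddCommGroup E] [InnerProductSpace ℝ E]
    {x y : E} {a b q : ℝ} (ha : 0 < a) (hb : 0 < b) (h : ⟪x, y⟫ ≤ q / (2 * a * b)) :
    2 * ⟪a • x, b • y⟫ ≤ q := by
  rw [real_inner_smul_left, real_inner_smul_right]
  have := (le_div_iff₀ (by positivity)).1 h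
  linarith

theorem stmt_13_general (d k : ℕ) (c : ℝ → ℝ)
    (e : Fin k → EuclideanSpace ℝ (Fin d)) (m : Fin k → ℝ)
    (hnorm : ∀ i, ‖e i‖ = 1)
    (hcpos : ∀ i, 0 < c (m i))
    (hsat : ∀ i j, i ≠ j →
      ⟪e i, e j⟫ ≤ (c (m i + m j) ^ 2 - c (m i) ^ 2 - c (m j) ^ 2)
        / (2 * c (m i) * c (m j))) :
    0 ≤ (∑ i, c (m i) ^ 2) +
        ∑ i, ∑ j ∈ Finset.univ.filter (fun j => i < j),
          (c (m i + m j) ^ 2 - c (m i) ^ 2 - c (m j) ^ 2) := by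
  have hdiag : ∀ i, ‖c (m i) • e i‖ ^ 2 = c (m i) ^ 2 := by
    simp [norm_smul, hnorm, sq_abs]
  calc (0 : ℝ) ≤ ‖∑ i, c (m i) • e i‖ ^ 2 := by positivity
    _ = ∑ i, c (m i) ^ 2 +
        ∑ i, ∑ j ∈ univ.filter (fun j => i < j), 2 * ⟪c (m i) • e i, c (m j) • e j⟫ := by
      rw [norm_sum_sq_eq_sum_add_sum_lt]
      simp only [hdiag]
    _ ≤ _ := by
      gcongr with i _ j hj
      exact two_mul_inner_smul_smul_le (hcpos i) (hcpos j) (hsat i j (mem_filter.1 hj).2.ne)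

theorem stmt_13 (d k : ℕ) (c : ℝ → ℝ)
    (heven : ∀ x : ℝ, c (-x) = c x)
    (hnonneg : ∀ x : ℝ, 0 ≤ c x)
    (e : Fin k → EuclideanSpace ℝ (Fin d)) (m : Fin k → ℝ)
    (hnorm : ∀ i, ‖e i‖ = 1)
    (hm0 : ∀ i, m i ≠ 0)
    (hsum : ∑ i, m i = 0)
    (hcpos : ∀ i, 0 < c (m i))
    (hsat : ∀ i j, i ≠ j →
      ⟪e i, e j⟫ ≤ (c (m i + m j) ^ 2 - c (m i) ^ 2 - c (m j) ^ 2)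
        / (2 * c (m i) * c (m j))) :
    0 ≤ (∑ i, c (m i) ^ 2) +
        ∑ i, ∑ j ∈ Finset.univ.filter (fun j => i < j),
          (c (m i + m j) ^ 2 - c (m i) ^ 2 - c (m j) ^ 2) :=
  stmt_13_general d k c e m hnorm hcpos hsat
end
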